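/- Fix p ∈ {1,…,d−1}. For every q ≥ 1 and every sequence i_1,…,i_q ∈ {1,…,p+1}, the polynomial function M ↦ Tr(M_{i_1 i_2} M_{i_2 i_3}⋯M_{i_q i_1}) on M_d(ℂ) is equal, as a rational function on M_d(ℂ) (i.e., the identity holds at every M for which all inverted factors are nonzero), to a finite product of factors each of one of the following forms: Tr(M_{11}^n); Tr(M_{1i} M_{i1} M_{11}^n); Tr(M_{1i} M_{ij} M_{j1} M_{11}^n); M_{ii}; M_{ij} M_{ji}; (M_{ij} M_{ji})^{−1}; M_{ij} M_{jk} M_{ki}; where n ∈ ℕ and i, j, k are distinct integers in {2,…,p+1}. -/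

import Mathlib

noncomputable section

/-- The block (in `{1,…,p+1}`, 0-indexed) of an index in `{1,…,d}` for the partition
`I₁ = {1,…,d-p}`, `I_a = {d-p+a-1}` for `a = 2,…,p+1`. -/
def blockOfC (d p : ℕ) (x : Fin d) : Fin (p + 1) :=
  if _ : x.val < d - p then 0 else ⟨x.val - (d - p) + 1, by have := x.isLt; omega⟩

/-- The set of indices in the block `a`. -/
def blockIdxC (d p : ℕ) (a : Fin (p + 1)) : Finset (Fin d) :=
  Finset.univ.filter (fun x => blockOfC d p x = a)

/-- The embedding of the corner block `I₁ = {1,…,d-p}` into `{1,…,d}`. -/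
def cornEmb (d p : ℕ) : Fin (d - p) → Fin d := Fin.castLE (Nat.sub_le d p)

/-- The index `d - p + i` (0-based) of the singleton block `I_{i+2} = {d-p+i+1}` (1-based). -/
def singEmb (d p : ℕ) (hp : p ≤ d) (i : Fin p) : Fin d :=
  ⟨d - p + i.val, by have := i.isLt; omega⟩

/-- The scalar `Tr(M_{i₁i₂} M_{i₂i₃} ⋯ M_{i_q i₁})` associated to a matrix `M ∈ M_d(ℂ)` and
a cyclic word `i : Fin (q+1) → Fin (p+1)` of blocks (the word has length `q+1 ≥ 1`). -/
def blockTrMat (d p : ℕ) (M : Matrix (Fin d) (Fin d) ℂ) {q : ℕ}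
    (i : Fin (q + 1) → Fin (p + 1)) : ℂ :=
  ∑ j ∈ Fintype.piFinset (fun k => blockIdxC d p (i k)),
    ((List.finRange (q + 1)).map (fun k => M (j k) (j (k + 1)))).prod

/-- The possible elementary factors appearing in the factorization of a block trace
`Tr(M_{i₁i₂}⋯M_{i_qi₁})`; the indices `i, j, k` below are distinct singleton-block indices in
`{2,…,p+1}`. -/
inductive MinorFactor (p : ℕ) : Type where
  /-- `Tr(M₁₁ⁿ)` -/
  | trPow (n : ℕ)
  /-- `Tr(M_{1i} M_{i1} M₁₁ⁿ)` -/
  | trColRow (i : Fin p) (n : ℕ)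
  /-- `Tr(M_{1i} M_{ij} M_{j1} M₁₁ⁿ)` -/
  | trColMidRow (i j : Fin p) (hij : i ≠ j) (n : ℕ)
  /-- `M_{ii}` -/
  | diag (i : Fin p)
  /-- `M_{ij} M_{ji}` -/
  | pairProd (i j : Fin p) (hij : i ≠ j)
  /-- `(M_{ij} M_{ji})⁻¹` -/
  | pairProdInv (i j : Fin p) (hij : i ≠ j)
  /-- `M_{ij} M_{jk} M_{ki}` -/
  | tripleProd (i j k : Fin p) (hij : i ≠ j) (hik : i ≠ k) (hjk : j ≠ k)

/-- Evaluation of an elementary factor at a matrix `M ∈ M_d(ℂ)`. -/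
def evalFactor (d p : ℕ) (hp : p ≤ d) (M : Matrix (Fin d) (Fin d) ℂ) :
    MinorFactor p → ℂ
  | .trPow n => Matrix.trace ((M.submatrix (cornEmb d p) (cornEmb d p)) ^ n)
  | .trColRow i n =>
      ∑ a : Fin (d - p), ∑ b : Fin (d - p),
        M (cornEmb d p a) (singEmb d p hp i) * M (singEmb d p hp i) (cornEmb d p b) *
          ((M.submatrix (cornEmb d p) (cornEmb d p)) ^ n) b a
  | .trColMidRow i j _ n =>
      ∑ a : Fin (d - p), ∑ b : Fin (d - p),
        M (cornEmb d p a) (singEmb d p hp i) *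
          M (singEmb d p hp i) (singEmb d p hp j) * M (singEmb d p hp j) (cornEmb d p b) *
          ((M.submatrix (cornEmb d p) (cornEmb d p)) ^ n) b a
  | .diag i => M (singEmb d p hp i) (singEmb d p hp i)
  | .pairProd i j _ =>
      M (singEmb d p hp i) (singEmb d p hp j) * M (singEmb d p hp j) (singEmb d p hp i)
  | .pairProdInv i j _ =>
      (M (singEmb d p hp i) (singEmb d p hp j) * M (singEmb d p hp j) (singEmb d p hp i))⁻¹
  | .tripleProd i j k _ _ _ =>
      M (singEmb d p hp i) (singEmb d p hp j) * M (singEmb d p hp j) (singEmb d p hp k) *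
        M (singEmb d p hp k) (singEmb d p hp i)

/-- The regularity condition for a factor at `M`: the inverted factors must be nonzero. -/
def factorRegular (d p : ℕ) (hp : p ≤ d) (M : Matrix (Fin d) (Fin d) ℂ) :
    MinorFactor p → Prop
  | .pairProdInv i j _ =>
      M (singEmb d p hp i) (singEmb d p hp j) * M (singEmb d p hp j) (singEmb d p hp i) ≠ 0
  | _ => True

section Aux

open Finset

variable {d p : ℕ}

/-- Open path product: `M x z₁ * M z₁ z₂ * ⋯ * M z_r y`. -/
def pathM (M : Matrix (Fin d) (Fin d) ℂ) : Fin d → List (Fin d) → Fin d → ℂ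
  | x, [], y => M x y
  | x, z :: l, y => M x z * pathM M z l y

/-- Path sum over blocks. -/
def cyc (M : Matrix (Fin d) (Fin d) ℂ) : Fin d → List (Finset (Fin d)) → Fin d → ℂ
  | x, [], y => M x y
  | x, S :: w, y => ∑ z ∈ S, M x z * cyc M z w y

@[simp] lemma pathM_nil (M : Matrix (Fin d) (Fin d) ℂ) (x y : Fin d) :
    pathM M x [] y = M x y := rfl

@[simp] lemma pathM_cons (M : Matrix (Fin d) (Fin d) ℂ) (x z y : Fin d) (l : List (Fin d)) :
    pathM M x (z :: l) y = M x z * pathM M z l y := rfl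

@[simp] lemma cyc_nil (M : Matrix (Fin d) (Fin d) ℂ) (x y : Fin d) :
    cyc M x [] y = M x y := rfl

@[simp] lemma cyc_cons (M : Matrix (Fin d) (Fin d) ℂ) (x y : Fin d) (S : Finset (Fin d))
    (w : List (Finset (Fin d))) :
    cyc M x (S :: w) y = ∑ z ∈ S, M x z * cyc M z w y := rfl

lemma cyc_split (M : Matrix (Fin d) (Fin d) ℂ) (x y : Fin d) (S : Finset (Fin d))
    (W₁ W₂ : List (Finset (Fin d))) :
    cyc M x (W₁ ++ S :: W₂) y = ∑ z ∈ S, cyc M x W₁ z * cyc M z W₂ y := by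
  induction W₁ generalizing x with
  | nil => simp
  | cons T W ih =>
      simp only [List.cons_append, cyc_cons, ih, Finset.mul_sum]
      rw [Finset.sum_comm]
      refine Finset.sum_congr rfl fun z _ => ?_
      rw [Finset.sum_mul]
      exact Finset.sum_congr rfl fun u _ => by ring

lemma cyc_split_sing (M : Matrix (Fin d) (Fin d) ℂ) (x y u : Fin d)
    (W₁ W₂ : List (Finset (Fin d))) :
    cyc M x (W₁ ++ {u} :: W₂) y = cyc M x W₁ u * cyc M u W₂ y := by
  rw [cyc_split, Finset.sum_singleton]

lemma cyc_rotate (M : Matrix (Fin d) (Fin d) ℂ) (S T : Finset (Fin d))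
    (W₁ W₂ : List (Finset (Fin d))) :
    ∑ x ∈ S, cyc M x (W₁ ++ T :: W₂) x = ∑ y ∈ T, cyc M y (W₂ ++ S :: W₁) y := by
  simp only [cyc_split]
  rw [Finset.sum_comm]
  exact Finset.sum_congr rfl fun y _ => Finset.sum_congr rfl fun x _ => by ring

end Aux
section Aux2

variable {d p : ℕ}

/-- Letter → block finset, with letters in `Option (Fin p)`. -/
def Bo (d p : ℕ) : Option (Fin p) → Finset (Fin d)
  | none => blockIdxC d p 0
  | some s => blockIdxC d p s.succ

lemma mem_blockIdx_zero {x : Fin d} : x ∈ blockIdxC d p 0 ↔ (x : ℕ) < d - p := by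
  simp only [blockIdxC, Finset.mem_filter, Finset.mem_univ, true_and]
  simp only [blockOfC]
  constructor
  · intro h
    by_contra hlt
    rw [dif_neg hlt] at h
    exact absurd (congrArg Fin.val h) (by simp)
  · intro h; rw [dif_pos h]

lemma sum_blockIdx_zero (f : Fin d → ℂ) :
    ∑ x ∈ blockIdxC d p 0, f x = ∑ a : Fin (d - p), f (cornEmb d p a) := by
  refine Finset.sum_bij' (fun x hx => (⟨x, mem_blockIdx_zero.1 hx⟩ : Fin (d - p)))
    (fun a _ => cornEmb d p a) (fun _ _ => Finset.mem_univ _) ?_ ?_ ?_ ?_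
  · intro a _
    exact mem_blockIdx_zero.2 a.isLt
  · intro x hx; exact Fin.ext rfl
  · intro a _; exact Fin.ext rfl
  · intro x hx; rfl

lemma blockIdx_succ (hp : p ≤ d) (s : Fin p) :
    blockIdxC d p s.succ = {singEmb d p hp s} := by
  ext x
  simp only [blockIdxC, Finset.mem_filter, Finset.mem_univ, true_and, Finset.mem_singleton]
  simp only [blockOfC]
  constructor
  · intro h
    by_cases hlt : (x : ℕ) < d - p
    · rw [dif_pos hlt] at h
      exact absurd (congrArg Fin.val h) (by simp [Fin.val_succ])
    · rw [dif_neg hlt] at h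
      have := congrArg Fin.val h
      simp only [Fin.val_succ] at this
      have hx := x.isLt
      exact Fin.ext (by simp only [singEmb]; omega)
  · rintro rfl
    have hlt : ¬ ((singEmb d p hp s : Fin d) : ℕ) < d - p := by simp [singEmb]
    rw [dif_neg hlt]
    exact Fin.ext (by simp [singEmb, Fin.val_succ])

lemma Bo_some (hp : p ≤ d) (s : Fin p) : Bo d p (some s) = {singEmb d p hp s} := by
  simp [Bo, blockIdx_succ hp]

end Aux2
section Aux3

variable {d p : ℕ}

lemma cyc_corner_rep (M : Matrix (Fin d) (Fin d) ℂ) (m : ℕ) (a : Fin (d - p)) (y : Fin d) :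
    cyc M (cornEmb d p a) (List.replicate m (blockIdxC d p 0)) y
      = ∑ b : Fin (d - p), ((M.submatrix (cornEmb d p) (cornEmb d p)) ^ m) a b
          * M (cornEmb d p b) y := by
  induction m generalizing a with
  | zero => simp [Matrix.one_apply]
  | succ m ih =>
      rw [List.replicate_succ, cyc_cons, sum_blockIdx_zero]
      simp only [ih, Finset.mul_sum]
      rw [Finset.sum_comm]
      refine Finset.sum_congr rfl fun b _ => ?_
      rw [pow_succ', Matrix.mul_apply, Finset.sum_mul]
      refine Finset.sum_congr rfl fun a' _ => ?_
      simp only [Matrix.submatrix_apply]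
      ring

lemma sum_cyc_corner_trace (M : Matrix (Fin d) (Fin d) ℂ) (m : ℕ) :
    ∑ x ∈ blockIdxC d p 0, cyc M x (List.replicate m (blockIdxC d p 0)) x
      = Matrix.trace ((M.submatrix (cornEmb d p) (cornEmb d p)) ^ (m + 1)) := by
  rw [sum_blockIdx_zero]
  simp only [cyc_corner_rep]
  rw [Matrix.trace]
  refine Finset.sum_congr rfl fun a _ => ?_
  rw [Matrix.diag_apply, pow_succ, Matrix.mul_apply]
  refine Finset.sum_congr rfl fun b _ => ?_
  simp [Matrix.submatrix_apply]

lemma cyc_corner_W (M : Matrix (Fin d) (Fin d) ℂ) (hp : p ≤ d) (s t : Fin p) (m : ℕ) :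
    cyc M (singEmb d p hp s) (List.replicate (m + 1) (blockIdxC d p 0)) (singEmb d p hp t)
      = ∑ a : Fin (d - p), M (singEmb d p hp s) (cornEmb d p a) *
          ∑ b : Fin (d - p), ((M.submatrix (cornEmb d p) (cornEmb d p)) ^ m) a b
            * M (cornEmb d p b) (singEmb d p hp t) := by
  rw [List.replicate_succ, cyc_cons, sum_blockIdx_zero]
  exact Finset.sum_congr rfl fun a _ => by rw [cyc_corner_rep]

lemma eval_trColRow_eq (hp : p ≤ d) (M : Matrix (Fin d) (Fin d) ℂ) (t : Fin p) (m : ℕ) :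
    evalFactor d p hp M (.trColRow t m)
      = cyc M (singEmb d p hp t) (List.replicate (m + 1) (blockIdxC d p 0))
          (singEmb d p hp t) := by
  rw [cyc_corner_W M hp t t m, evalFactor]
  simp only [Finset.mul_sum, Finset.sum_mul]
  rw [Finset.sum_comm]
  exact Finset.sum_congr rfl fun a _ => Finset.sum_congr rfl fun b _ => by ring

lemma eval_trColMidRow_eq (hp : p ≤ d) (M : Matrix (Fin d) (Fin d) ℂ) (t s : Fin p)
    (h : t ≠ s) (m : ℕ) :
    evalFactor d p hp M (.trColMidRow t s h m)
      = M (singEmb d p hp t) (singEmb d p hp s) *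
          cyc M (singEmb d p hp s) (List.replicate (m + 1) (blockIdxC d p 0))
            (singEmb d p hp t) := by
  rw [cyc_corner_W M hp s t m, evalFactor]
  simp only [Finset.mul_sum, Finset.sum_mul]
  rw [Finset.sum_comm]
  exact Finset.sum_congr rfl fun a _ => Finset.sum_congr rfl fun b _ => by ring

/-- Elementary-factor list accounting for a corner excursion from `s` to `t`
through `m+1` corner letters. -/
def wFacL (p : ℕ) (s t : Fin p) (m : ℕ) : List (MinorFactor p) :=
  if h : s = t then [.trColRow t m]
  else [.trColMidRow t s (fun he => h he.symm) m, .pairProdInv t s (fun he => h he.symm)]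

lemma wFac_spec (hp : p ≤ d) (s t : Fin p) (m : ℕ) (M : Matrix (Fin d) (Fin d) ℂ)
    (hreg : ∀ F ∈ wFacL p s t m, factorRegular d p hp M F) :
    cyc M (singEmb d p hp s) (List.replicate (m + 1) (blockIdxC d p 0)) (singEmb d p hp t)
      = ((wFacL p s t m).map (evalFactor d p hp M)).prod *
          (if s = t then 1 else M (singEmb d p hp s) (singEmb d p hp t)) := by
  by_cases h : s = t
  · subst h
    simp [wFacL, eval_trColRow_eq hp M s m]
  · have hne : t ≠ s := fun he => h he.symm
    have hreg' : M (singEmb d p hp t) (singEmb d p hp s)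
        * M (singEmb d p hp s) (singEmb d p hp t) ≠ 0 := by
      have := hreg (.pairProdInv t s (fun he => h he.symm)) (by simp [wFacL, h])
      simpa [factorRegular] using this
    simp only [wFacL, dif_neg h, List.map_cons, List.map_nil, List.prod_cons, List.prod_nil,
      if_neg h, mul_one]
    rw [eval_trColMidRow_eq hp M t s hne m]
    rw [show evalFactor d p hp M (.pairProdInv t s (fun he => h he.symm))
      = (M (singEmb d p hp t) (singEmb d p hp s)
          * M (singEmb d p hp s) (singEmb d p hp t))⁻¹ from rfl]
    obtain ⟨ha, hb⟩ := mul_ne_zero_iff.1 hreg'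
    field_simp

end Aux3
section Aux4

variable {d p : ℕ}

lemma scalar_lemma (hp : p ≤ d) :
    ∀ (n : ℕ) (us : List (Fin p)), us.length ≤ n → ∀ (s : Fin p),
    ∃ L : List (MinorFactor p), ∀ M : Matrix (Fin d) (Fin d) ℂ,
      (∀ F ∈ L, factorRegular d p hp M F) →
        pathM M (singEmb d p hp s) (us.map (singEmb d p hp)) (singEmb d p hp s)
          = (L.map (evalFactor d p hp M)).prod := by
  intro n
  induction n with
  | zero =>
      intro us hus s
      have hnil : us = [] := List.length_eq_zero_iff.1 (Nat.le_zero.1 hus)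
      subst hnil
      exact ⟨[.diag s], fun M _ => by simp [evalFactor]⟩
  | succ n ih =>
      intro us hus s
      match us with
      | [] =>
          exact ⟨[.diag s], fun M _ => by simp [evalFactor]⟩
      | [y] =>
          by_cases h : s = y
          · subst h
            exact ⟨[.diag s, .diag s], fun M _ => by simp [evalFactor]⟩
          · exact ⟨[.pairProd s y h], fun M _ => by simp [evalFactor]⟩
      | y :: z :: rest =>
          by_cases h1 : s = y
          · subst h1
            obtain ⟨L', hL'⟩ := ih (z :: rest) (by simpa using hus) s
            refine ⟨.diag s :: L', fun M hreg => ?_⟩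
            have := hL' M (fun F hF => hreg F (List.mem_cons_of_mem _ hF))
            simp only [List.map_cons, pathM_cons, List.prod_cons] at *
            rw [← this]
            simp only [evalFactor]
            try ring
          · by_cases h2 : y = z
            · subst h2
              obtain ⟨L', hL'⟩ := ih (y :: rest) (by simpa using hus) s
              refine ⟨.diag y :: L', fun M hreg => ?_⟩
              have := hL' M (fun F hF => hreg F (List.mem_cons_of_mem _ hF))
              simp only [List.map_cons, pathM_cons, List.prod_cons] at *
              rw [← this]
              simp only [evalFactor]
              try ring
            · by_cases h3 : s = z
              · subst h3
                obtain ⟨L', hL'⟩ := ih rest (by simp at hus ⊢; omega) s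
                refine ⟨.pairProd s y h1 :: L', fun M hreg => ?_⟩
                have := hL' M (fun F hF => hreg F (List.mem_cons_of_mem _ hF))
                simp only [List.map_cons, pathM_cons, List.prod_cons] at *
                rw [← this]
                simp only [evalFactor]
                try ring
              · obtain ⟨L', hL'⟩ := ih (z :: rest) (by simpa using hus) s
                refine ⟨.tripleProd s y z h1 h3 h2 :: .pairProdInv s z h3 :: L',
                  fun M hreg => ?_⟩
                have hpath := hL' M
                  (fun F hF => hreg F (List.mem_cons_of_mem _ (List.mem_cons_of_mem _ hF)))
                have hnz : M (singEmb d p hp s) (singEmb d p hp z)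
                    * M (singEmb d p hp z) (singEmb d p hp s) ≠ 0 := by
                  have := hreg (.pairProdInv s z h3)
                    (List.mem_cons_of_mem _ List.mem_cons_self)
                  simpa [factorRegular] using this
                simp only [List.map_cons, pathM_cons, List.prod_cons] at *
                rw [← hpath]
                rw [show evalFactor d p hp M (.tripleProd s y z h1 h3 h2)
                  = M (singEmb d p hp s) (singEmb d p hp y)
                    * M (singEmb d p hp y) (singEmb d p hp z)
                    * M (singEmb d p hp z) (singEmb d p hp s) from rfl]
                rw [show evalFactor d p hp M (.pairProdInv s z h3)
                  = (M (singEmb d p hp s) (singEmb d p hp z)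
                    * M (singEmb d p hp z) (singEmb d p hp s))⁻¹ from rfl]
                obtain ⟨ha, hb⟩ := mul_ne_zero_iff.1 hnz
                field_simp

end Aux4
section Aux5

variable {d p : ℕ}

lemma countP_map_some (us : List (Fin p)) :
    (us.map some).countP (fun o => o.isNone) = 0 := by
  induction us with
  | nil => rfl
  | cons v vs ih => simp [List.countP_cons, ih]

@[simp] lemma countP_isNone_comp_some (us : List (Fin p)) :
    us.countP ((fun o : Option (Fin p) => o.isNone) ∘ some) = 0 := by
  induction us with
  | nil => rfl
  | cons v vs ih => simp [List.countP_cons, Function.comp, ih]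

lemma countP_rep_none (k : ℕ) :
    (List.replicate k (none : Option (Fin p))).countP (fun o => o.isNone) = k := by
  induction k with
  | zero => rfl
  | succ k ih => simp [List.replicate_succ, List.countP_cons, ih]

lemma all_some_of_countP_zero :
    ∀ (u : List (Option (Fin p))), u.countP (fun o => o.isNone) = 0 →
      ∃ us : List (Fin p), u = us.map some := by
  intro u
  induction u with
  | nil => exact fun _ => ⟨[], rfl⟩
  | cons o u' ih =>
      intro h
      match o with
      | none => simp [List.countP_cons] at h
      | some v =>
          rw [List.countP_cons] at h
          simp only [Option.isNone_some, cond_false] at h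
          obtain ⟨us, rfl⟩ := ih (by omega)
          exact ⟨v :: us, rfl⟩

lemma runDecomp :
    ∀ (u : List (Option (Fin p))),
      ∃ m u₃, u = List.replicate m none ++ u₃ ∧
        (u₃ = [] ∨ ∃ t u₄, u₃ = some t :: u₄) := by
  intro u
  induction u with
  | nil => exact ⟨0, [], rfl, Or.inl rfl⟩
  | cons o u' ih =>
      match o with
      | some t => exact ⟨0, some t :: u', rfl, Or.inr ⟨t, u', rfl⟩⟩
      | none =>
          obtain ⟨m, u₃, hu, h₃⟩ := ih
          exact ⟨m + 1, u₃, by rw [List.replicate_succ, List.cons_append, hu], h₃⟩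

lemma decomp (u : List (Option (Fin p))) (h : u.countP (fun o => o.isNone) ≠ 0) :
    ∃ (us₁ : List (Fin p)) (m : ℕ) (u₃ : List (Option (Fin p))),
      u = us₁.map some ++ List.replicate (m + 1) none ++ u₃ ∧
        (u₃ = [] ∨ ∃ t u₄, u₃ = some t :: u₄) := by
  induction u with
  | nil => exact absurd rfl h
  | cons o u' ih =>
      match o with
      | some v =>
          rw [List.countP_cons] at h
          simp only [Option.isNone_some, cond_false, add_zero] at h
          obtain ⟨us₁, m, u₃, hu, h₃⟩ := ih h
          exact ⟨v :: us₁, m, u₃, by simp [hu], h₃⟩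
      | none =>
          obtain ⟨m, u₃, hu, h₃⟩ := runDecomp u'
          refine ⟨[], m, u₃, ?_, h₃⟩
          simp [List.replicate_succ, hu]

lemma cyc_shape (hp : p ≤ d) (M : Matrix (Fin d) (Fin d) ℂ) (us₁' : List (Fin p)) (ℓ : Fin p)
    (X : List (Option (Fin p))) (x y : Fin d) :
    cyc M x ((us₁'.map some ++ some ℓ :: X).map (Bo d p)) y
      = cyc M x ((us₁'.map some).map (Bo d p)) (singEmb d p hp ℓ) *
          cyc M (singEmb d p hp ℓ) (X.map (Bo d p)) y := by
  have : (us₁'.map some ++ some ℓ :: X).map (Bo d p)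
      = (us₁'.map some).map (Bo d p) ++ {singEmb d p hp ℓ} :: X.map (Bo d p) := by
    simp [List.map_append, Bo_some hp]
  rw [this, cyc_split_sing]

end Aux5
section Aux6

variable {d p : ℕ}

@[simp] lemma Bo_none : Bo d p none = blockIdxC d p 0 := rfl

lemma cyc_allsome (hp : p ≤ d) (M : Matrix (Fin d) (Fin d) ℂ) :
    ∀ (us : List (Fin p)) (x y : Fin d),
      cyc M x ((us.map some).map (Bo d p)) y = pathM M x (us.map (singEmb d p hp)) y := by
  intro us
  induction us with
  | nil => intro x y; rfl
  | cons v vs ih =>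
      intro x y
      simp only [List.map_cons, cyc_cons, pathM_cons, Bo_some hp, Finset.sum_singleton, ih]

lemma main_zero (hp : p ≤ d) (u : List (Option (Fin p)))
    (h0 : u.countP (fun o => o.isNone) = 0) (s : Fin p) :
    ∃ L : List (MinorFactor p), ∀ M : Matrix (Fin d) (Fin d) ℂ,
      (∀ F ∈ L, factorRegular d p hp M F) →
        cyc M (singEmb d p hp s) (u.map (Bo d p)) (singEmb d p hp s)
          = (L.map (evalFactor d p hp M)).prod := by
  obtain ⟨us, rfl⟩ := all_some_of_countP_zero u h0
  obtain ⟨L, hL⟩ := scalar_lemma hp us.length us le_rfl s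
  exact ⟨L, fun M hreg => by rw [cyc_allsome hp]; exact hL M hreg⟩

lemma main_cyc (hp : p ≤ d) :
    ∀ (n : ℕ) (u : List (Option (Fin p))), u.countP (fun o => o.isNone) ≤ n →
    ∀ s : Fin p, ∃ L : List (MinorFactor p), ∀ M : Matrix (Fin d) (Fin d) ℂ,
      (∀ F ∈ L, factorRegular d p hp M F) →
        cyc M (singEmb d p hp s) (u.map (Bo d p)) (singEmb d p hp s)
          = (L.map (evalFactor d p hp M)).prod := by
  intro n
  induction n with
  | zero =>
      intro u hu s
      exact main_zero hp u (Nat.le_zero.1 hu) s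
  | succ n ih =>
      intro u hu s
      by_cases h0 : u.countP (fun o => o.isNone) = 0
      · exact main_zero hp u h0 s
      · obtain ⟨us₁, m, u₃, hudef, h₃⟩ := decomp u h0
        rcases h₃ with rfl | ⟨t, u₄, rfl⟩
        · -- u₃ = []
          rcases List.eq_nil_or_concat us₁ with rfl | ⟨us₁', ℓ, rfl⟩
          · -- Branch D : u = replicate (m+1) none
            refine ⟨wFacL p s s m, fun M hreg => ?_⟩
            have hshape : u.map (Bo d p)
                = List.replicate (m + 1) (blockIdxC d p 0) := by
              simp [hudef]
            rw [hshape, wFac_spec hp s s m M hreg, if_pos rfl, mul_one]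
          · -- Branch C : u = (us₁' ++ [ℓ]).map some ++ replicate (m+1) none
            by_cases hls : ℓ = s
            · subst hls
              have hcnt : (us₁'.map some).countP (fun o => o.isNone) ≤ n := by
                simp [countP_map_some, Function.comp, Option.isNone_some]
              obtain ⟨L', hL'⟩ := ih (us₁'.map some) hcnt ℓ
              refine ⟨wFacL p ℓ ℓ m ++ L', fun M hreg => ?_⟩
              have hreg₁ : ∀ F ∈ wFacL p ℓ ℓ m, factorRegular d p hp M F :=
                fun F hF => hreg F (List.mem_append_left _ hF)
              have hreg₂ : ∀ F ∈ L', factorRegular d p hp M F :=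
                fun F hF => hreg F (List.mem_append_right _ hF)
              have hshape : u.map (Bo d p)
                  = (us₁'.map some).map (Bo d p) ++ {singEmb d p hp ℓ} ::
                      List.replicate (m + 1) (blockIdxC d p 0) := by
                simp [hudef, Bo_some hp]
              rw [hshape, cyc_split_sing, wFac_spec hp ℓ ℓ m M hreg₁, if_pos rfl, mul_one,
                hL' M hreg₂, List.map_append, List.prod_append]
              ring
            · have hcnt : (us₁'.map some ++ [some ℓ]).countP (fun o => o.isNone) ≤ n := by
                simp [List.countP_append, countP_map_some, List.countP_cons, Function.comp, Option.isNone_some]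
              obtain ⟨L', hL'⟩ := ih (us₁'.map some ++ [some ℓ]) hcnt s
              refine ⟨wFacL p ℓ s m ++ L', fun M hreg => ?_⟩
              have hreg₁ : ∀ F ∈ wFacL p ℓ s m, factorRegular d p hp M F :=
                fun F hF => hreg F (List.mem_append_left _ hF)
              have hreg₂ : ∀ F ∈ L', factorRegular d p hp M F :=
                fun F hF => hreg F (List.mem_append_right _ hF)
              have hshape : u.map (Bo d p)
                  = (us₁'.map some).map (Bo d p) ++ {singEmb d p hp ℓ} ::
                      List.replicate (m + 1) (blockIdxC d p 0) := by
                simp [hudef, Bo_some hp]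
              have hval := hL' M hreg₂
              rw [cyc_shape hp M us₁' ℓ [] _ _] at hval
              rw [hshape, cyc_split_sing, wFac_spec hp ℓ s m M hreg₁, if_neg hls,
                List.map_append, List.prod_append, ← hval]
              simp only [List.map_nil, cyc_nil]
              ring
        · -- u₃ = some t :: u₄
          rcases List.eq_nil_or_concat us₁ with rfl | ⟨us₁', ℓ, rfl⟩
          · -- Branch B : u = replicate (m+1) none ++ some t :: u₄
            have hcnt4 : u₄.countP (fun o => o.isNone) ≤ n := by
              have : u.countP (fun o => o.isNone)
                  = m + 1 + u₄.countP (fun o => o.isNone) := by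
                simp [hudef, List.countP_append, countP_rep_none, List.countP_cons]
              omega
            by_cases hst : s = t
            · subst hst
              obtain ⟨L', hL'⟩ := ih u₄ hcnt4 s
              refine ⟨wFacL p s s m ++ L', fun M hreg => ?_⟩
              have hreg₁ : ∀ F ∈ wFacL p s s m, factorRegular d p hp M F :=
                fun F hF => hreg F (List.mem_append_left _ hF)
              have hreg₂ : ∀ F ∈ L', factorRegular d p hp M F :=
                fun F hF => hreg F (List.mem_append_right _ hF)
              have hshape : u.map (Bo d p)
                  = List.replicate (m + 1) (blockIdxC d p 0) ++ {singEmb d p hp s} ::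
                      u₄.map (Bo d p) := by
                simp [hudef, Bo_some hp]
              rw [hshape, cyc_split_sing, wFac_spec hp s s m M hreg₁, if_pos rfl, mul_one,
                hL' M hreg₂, List.map_append, List.prod_append]
            · obtain ⟨L', hL'⟩ := ih (some t :: u₄) (by
                simpa [List.countP_cons] using hcnt4) s
              refine ⟨wFacL p s t m ++ L', fun M hreg => ?_⟩
              have hreg₁ : ∀ F ∈ wFacL p s t m, factorRegular d p hp M F :=
                fun F hF => hreg F (List.mem_append_left _ hF)
              have hreg₂ : ∀ F ∈ L', factorRegular d p hp M F :=
                fun F hF => hreg F (List.mem_append_right _ hF)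
              have hshape : u.map (Bo d p)
                  = List.replicate (m + 1) (blockIdxC d p 0) ++ {singEmb d p hp t} ::
                      u₄.map (Bo d p) := by
                simp [hudef, Bo_some hp]
              have hval := hL' M hreg₂
              simp only [List.map_cons, Bo_some hp, cyc_cons, Finset.sum_singleton] at hval
              rw [hshape, cyc_split_sing, wFac_spec hp s t m M hreg₁, if_neg hst,
                List.map_append, List.prod_append, ← hval]
              ring
          · -- Branch A : u = (us₁' ++ [ℓ]).map some ++ replicate (m+1) none ++ some t :: u₄
            have hcnt4 : u₄.countP (fun o => o.isNone) ≤ n := by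
              have : u.countP (fun o => o.isNone)
                  = m + 1 + u₄.countP (fun o => o.isNone) := by
                simp [hudef, List.countP_append, countP_rep_none, countP_map_some,
                  List.countP_cons]
              omega
            have hshape : u.map (Bo d p)
                = (us₁'.map some).map (Bo d p) ++ {singEmb d p hp ℓ} ::
                    (List.replicate (m + 1) (blockIdxC d p 0) ++ {singEmb d p hp t} ::
                      u₄.map (Bo d p)) := by
              simp [hudef, Bo_some hp]
            by_cases hlt : ℓ = t
            · subst hlt
              have hcnt : (us₁'.map some ++ some ℓ :: u₄).countP (fun o => o.isNone) ≤ n := by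
                have h4 := hcnt4
                simp [List.countP_append, List.countP_cons, Function.comp, Option.isNone_some]
                omega
              obtain ⟨L', hL'⟩ := ih (us₁'.map some ++ some ℓ :: u₄) hcnt s
              refine ⟨wFacL p ℓ ℓ m ++ L', fun M hreg => ?_⟩
              have hreg₁ : ∀ F ∈ wFacL p ℓ ℓ m, factorRegular d p hp M F :=
                fun F hF => hreg F (List.mem_append_left _ hF)
              have hreg₂ : ∀ F ∈ L', factorRegular d p hp M F :=
                fun F hF => hreg F (List.mem_append_right _ hF)
              have hval := hL' M hreg₂
              rw [cyc_shape hp M us₁' ℓ u₄ _ _] at hval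
              rw [hshape, cyc_split_sing, cyc_split_sing,
                wFac_spec hp ℓ ℓ m M hreg₁, if_pos rfl, mul_one,
                List.map_append, List.prod_append, ← hval]
              ring
            · have hcnt : (us₁'.map some ++ some ℓ :: some t :: u₄).countP
                  (fun o => o.isNone) ≤ n := by
                have h4 := hcnt4
                simp [List.countP_append, List.countP_cons, Function.comp, Option.isNone_some]
                omega
              obtain ⟨L', hL'⟩ := ih (us₁'.map some ++ some ℓ :: some t :: u₄) hcnt s
              refine ⟨wFacL p ℓ t m ++ L', fun M hreg => ?_⟩
              have hreg₁ : ∀ F ∈ wFacL p ℓ t m, factorRegular d p hp M F :=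
                fun F hF => hreg F (List.mem_append_left _ hF)
              have hreg₂ : ∀ F ∈ L', factorRegular d p hp M F :=
                fun F hF => hreg F (List.mem_append_right _ hF)
              have hval := hL' M hreg₂
              rw [cyc_shape hp M us₁' ℓ (some t :: u₄) _ _] at hval
              simp only [List.map_cons, Bo_some hp, cyc_cons, Finset.sum_singleton] at hval
              rw [hshape, cyc_split_sing, cyc_split_sing,
                wFac_spec hp ℓ t m M hreg₁, if_neg hlt,
                List.map_append, List.prod_append, ← hval]
              ring

end Aux6
section Aux7

variable {d p : ℕ}

lemma exists_some_split (u : List (Option (Fin p))) (h : ¬ ∀ v ∈ u, v = none) :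
    ∃ u₁ t u₂, u = u₁ ++ some t :: u₂ := by
  induction u with
  | nil => exact absurd (fun v hv => absurd hv List.not_mem_nil) h
  | cons o u' ih =>
      match o with
      | some t => exact ⟨[], t, u', rfl⟩
      | none =>
          have h' : ¬ ∀ v ∈ u', v = none := by
            intro hall
            exact h (fun v hv => by
              rcases List.mem_cons.1 hv with rfl | hv'
              · rfl
              · exact hall v hv')
          obtain ⟨u₁, t, u₂, rfl⟩ := ih h'
          exact ⟨none :: u₁, t, u₂, rfl⟩

lemma thm_cyc (hp : p ≤ d) (ℓ₀ : Option (Fin p)) (u : List (Option (Fin p))) :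
    ∃ L : List (MinorFactor p), ∀ M : Matrix (Fin d) (Fin d) ℂ,
      (∀ F ∈ L, factorRegular d p hp M F) →
        ∑ x ∈ Bo d p ℓ₀, cyc M x (u.map (Bo d p)) x
          = (L.map (evalFactor d p hp M)).prod := by
  match ℓ₀ with
  | some s =>
      obtain ⟨L, hL⟩ := main_cyc hp (u.countP (fun o => o.isNone)) u le_rfl s
      exact ⟨L, fun M hreg => by
        rw [Bo_some hp, Finset.sum_singleton]; exact hL M hreg⟩
  | none =>
      by_cases hall : ∀ v ∈ u, v = none
      · refine ⟨[.trPow (u.length + 1)], fun M _ => ?_⟩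
        have hrep : u = List.replicate u.length none := List.eq_replicate_of_mem hall
        rw [show u.map (Bo d p) = List.replicate u.length (blockIdxC d p 0) by
          rw [hrep]; simp [List.map_replicate]]
        rw [show (Bo d p none : Finset (Fin d)) = blockIdxC d p 0 from rfl]
        rw [sum_cyc_corner_trace M u.length]
        simp [evalFactor]
      · obtain ⟨u₁, t, u₂, rfl⟩ := exists_some_split u hall
        obtain ⟨L, hL⟩ := main_cyc hp ((u₂ ++ none :: u₁).countP (fun o => o.isNone))
          (u₂ ++ none :: u₁) le_rfl t
        refine ⟨L, fun M hreg => ?_⟩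
        have h1 : (u₁ ++ some t :: u₂).map (Bo d p)
            = u₁.map (Bo d p) ++ {singEmb d p hp t} :: u₂.map (Bo d p) := by
          simp [Bo_some hp]
        rw [h1, cyc_rotate M (Bo d p none) {singEmb d p hp t}, Finset.sum_singleton]
        have h2 : (u₂ ++ none :: u₁).map (Bo d p)
            = u₂.map (Bo d p) ++ (Bo d p none) :: u₁.map (Bo d p) := by
          simp
        rw [← h2]
        exact hL M hreg

end Aux7
section Aux8

variable {d p : ℕ}

lemma piFinset_peel {q : ℕ} (S : Fin (q + 1) → Finset (Fin d))
    (F : (Fin (q + 1) → Fin d) → ℂ) :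
    ∑ j ∈ Fintype.piFinset S, F j
      = ∑ x ∈ S 0, ∑ t ∈ Fintype.piFinset (fun k : Fin q => S k.succ), F (Fin.cons x t) := by
  rw [← Finset.sum_product']
  refine Finset.sum_bij' (fun j _ => ((j 0, fun k => j k.succ) :
      Fin d × (Fin q → Fin d))) (fun z _ => Fin.cons z.1 z.2) ?_ ?_ ?_ ?_ ?_
  · intro j hj
    rw [Finset.mem_product]
    refine ⟨Fintype.mem_piFinset.1 hj 0, Fintype.mem_piFinset.2 fun k => ?_⟩
    exact Fintype.mem_piFinset.1 hj k.succ
  · intro z hz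
    rw [Finset.mem_product] at hz
    refine Fintype.mem_piFinset.2 fun k => ?_
    refine Fin.cases ?_ ?_ k
    · simpa using hz.1
    · intro k'
      simpa using Fintype.mem_piFinset.1 hz.2 k'
  · intro j _
    exact Fin.cons_self_tail j
  · intro z _
    simp
  · intro j _
    exact congrArg F (Fin.cons_self_tail j).symm

lemma castSucc_add_one {q : ℕ} (k : Fin q) :
    (k.castSucc : Fin (q + 1)) + 1 = k.succ := Fin.coeSucc_eq_succ

lemma pathM_ofFn (M : Matrix (Fin d) (Fin d) ℂ) :
    ∀ (q : ℕ) (j : Fin (q + 1) → Fin d) (y : Fin d),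
      pathM M (j 0) (List.ofFn (fun k : Fin q => j k.succ)) y
        = (∏ k : Fin q, M (j k.castSucc) (j k.succ)) * M (j (Fin.last q)) y := by
  intro q
  induction q with
  | zero =>
      intro j y
      simp [Fin.last]
  | succ q ih =>
      intro j y
      rw [List.ofFn_succ, pathM_cons]
      have := ih (fun k => j k.succ) y
      rw [this, Fin.prod_univ_succ]
      simp only [Fin.succ_castSucc, Fin.succ_last, Fin.castSucc_zero]
      ring

lemma cyclic_eq (M : Matrix (Fin d) (Fin d) ℂ) (q : ℕ) (j : Fin (q + 1) → Fin d) :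
    ∏ k : Fin (q + 1), M (j k) (j (k + 1))
      = (∏ k : Fin q, M (j k.castSucc) (j k.succ)) * M (j (Fin.last q)) (j 0) := by
  rw [Fin.prod_univ_castSucc]
  congr 1
  · exact Finset.prod_congr rfl fun k _ => by rw [castSucc_add_one]
  · rw [Fin.last_add_one]

lemma prod_cyclic (M : Matrix (Fin d) (Fin d) ℂ) (q : ℕ) (j : Fin (q + 1) → Fin d) :
    ∏ k : Fin (q + 1), M (j k) (j (k + 1))
      = pathM M (j 0) (List.ofFn (fun k : Fin q => j k.succ)) (j 0) := by
  rw [cyclic_eq, pathM_ofFn]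

lemma sum_piFinset_pathM (M : Matrix (Fin d) (Fin d) ℂ) :
    ∀ (q : ℕ) (S : Fin q → Finset (Fin d)) (x y : Fin d),
      ∑ t ∈ Fintype.piFinset S, pathM M x (List.ofFn t) y = cyc M x (List.ofFn S) y := by
  intro q
  induction q with
  | zero =>
      intro S x y
      rw [show Fintype.piFinset S = Finset.univ from Finset.eq_univ_of_forall
        (fun t => Fintype.mem_piFinset.2 (fun k => k.elim0))]
      rw [Finset.univ_unique, Finset.sum_singleton]
      simp
  | succ q ih =>
      intro S x y
      rw [piFinset_peel S (fun t => pathM M x (List.ofFn t) y)]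
      have h1 : ∀ (z : Fin d) (t : Fin q → Fin d),
          List.ofFn (Fin.cons z t : Fin (q + 1) → Fin d) = z :: List.ofFn t := by
        intro z t
        rw [List.ofFn_succ]
        simp
      rw [List.ofFn_succ, cyc_cons]
      refine Finset.sum_congr rfl fun z _ => ?_
      rw [show ∑ t ∈ Fintype.piFinset (fun k : Fin q => S k.succ),
          pathM M x (List.ofFn (Fin.cons z t : Fin (q + 1) → Fin d)) y
        = ∑ t ∈ Fintype.piFinset (fun k : Fin q => S k.succ),
            M x z * pathM M z (List.ofFn t) y from
        Finset.sum_congr rfl fun t _ => by rw [h1, pathM_cons]]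
      rw [← Finset.mul_sum, ih]

lemma bridge (M : Matrix (Fin d) (Fin d) ℂ) (q : ℕ) (i : Fin (q + 1) → Fin (p + 1)) :
    blockTrMat d p M i
      = ∑ x ∈ blockIdxC d p (i 0),
          cyc M x (List.ofFn (fun k : Fin q => blockIdxC d p (i k.succ))) x := by
  rw [blockTrMat]
  have h1 : ∀ j : Fin (q + 1) → Fin d,
      ((List.finRange (q + 1)).map (fun k => M (j k) (j (k + 1)))).prod
        = pathM M (j 0) (List.ofFn (fun k : Fin q => j k.succ)) (j 0) := by
    intro j
    rw [← Fin.prod_univ_def, prod_cyclic]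
  rw [Finset.sum_congr rfl fun j _ => h1 j]
  rw [piFinset_peel (fun k => blockIdxC d p (i k))
    (fun j => pathM M (j 0) (List.ofFn (fun k : Fin q => j k.succ)) (j 0))]
  refine Finset.sum_congr rfl fun x _ => ?_
  rw [← sum_piFinset_pathM M q (fun k : Fin q => blockIdxC d p (i k.succ)) x x]
  refine Finset.sum_congr rfl fun t _ => ?_
  have h0 : (Fin.cons x t : Fin (q + 1) → Fin d) 0 = x := Fin.cons_zero _ _
  have hs : (fun k : Fin q => (Fin.cons x t : Fin (q + 1) → Fin d) k.succ) = t :=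
    funext fun k => Fin.cons_succ _ _ _
  rw [h0, hs]

/-- Letter conversion `Fin (p+1) → Option (Fin p)`. -/
def finOpt (p : ℕ) (ℓ : Fin (p + 1)) : Option (Fin p) :=
  if h : ℓ = 0 then none else some (ℓ.pred h)

lemma Bo_finOpt (ℓ : Fin (p + 1)) : Bo d p (finOpt p ℓ) = blockIdxC d p ℓ := by
  rw [finOpt]
  by_cases h : ℓ = 0
  · rw [dif_pos h, h]; rfl
  · rw [dif_neg h]
    show blockIdxC d p (ℓ.pred h).succ = blockIdxC d p ℓ
    rw [Fin.succ_pred]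

end Aux8
/-- **Statement 16.** Every block trace `Tr(M_{i₁i₂} M_{i₂i₃} ⋯ M_{i_q i₁})` is equal, as a
rational function on `M_d(ℂ)` (i.e. at every `M` where all inverted factors are nonzero), to
a finite product of elementary factors of the forms `Tr(M₁₁ⁿ)`, `Tr(M_{1i}M_{i1}M₁₁ⁿ)`,
`Tr(M_{1i}M_{ij}M_{j1}M₁₁ⁿ)`, `M_{ii}`, `M_{ij}M_{ji}`, `(M_{ij}M_{ji})⁻¹`,
`M_{ij}M_{jk}M_{ki}` with `i, j, k` distinct in `{2,…,p+1}`. -/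
theorem stmt16 (d p : ℕ) (hp : 1 ≤ p) (hpd : p ≤ d - 1) (q : ℕ)
    (i : Fin (q + 1) → Fin (p + 1)) :
    ∃ L : List (MinorFactor p), ∀ M : Matrix (Fin d) (Fin d) ℂ,
      (∀ F ∈ L, factorRegular d p (by omega) M F) →
        blockTrMat d p M i = (L.map (evalFactor d p (by omega) M)).prod := by
  have hp' : p ≤ d := by omega
  obtain ⟨L, hL⟩ := thm_cyc hp' (finOpt p (i 0))
    (List.ofFn (fun k : Fin q => finOpt p (i k.succ)))
  refine ⟨L, fun M hreg => ?_⟩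
  rw [bridge M q i]
  have h1 : (List.ofFn (fun k : Fin q => finOpt p (i k.succ))).map (Bo d p)
      = List.ofFn (fun k : Fin q => blockIdxC d p (i k.succ)) := by
    rw [List.map_ofFn]
    exact congrArg List.ofFn (funext fun k => Bo_finOpt _)
  rw [← h1, ← Bo_finOpt (i 0)]
  exact hL M hreg

end
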